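/- Let G be a digraph with a global sink. The set of all recurrent chip configurations on G is an abelian group under the operation (σ, σ') ↦ (σ + σ')°, and this group is isomorphic, via the map sending a recurrent configuration to its equivalence class, to the sandpile group S(G) = ℤ^{n−1}/ℤ^{n−1}Δ'(G). -/

import Mathlib

/-!
Firing a vertex subtracts its row of the reduced Laplacian `Δ'`, so a legal firing sequence with
firing vector `f` turns `σ` into `σ - f Δ'` and preserves its class. Because the sink is
reachable from every vertex, the number of firings from `σ` is bounded linearly in the number of
chips (a vertex next to the sink loses chips, and a vertex that fires often floods its
out-neighbours), so every configuration stabilizes.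

Adding chips to, or legally firing from, an accessible configuration keeps it accessible; this
gives closure. Every configuration with at least `d_v` chips at each `v` is accessible, and
each class contains one (add a multiple of a positive vector of the row span of `Δ'`); its
stabilization is recurrent, which gives surjectivity. For injectivity, if `σ₁ - σ₂ = c Δ'` with
`σ₁` recurrent and `σ₂` stable, then `c ≥ 0` by the least action principle, and `c = 0` by
symmetry.
-/

def outdeg {V E : Type} [Fintype E] [DecidableEq V] (tail : E → V) (v : V) : ℕ :=
  (Finset.univ.filter (fun e => tail e = v)).card

/-- The number of edges from `v` to `w`. -/
def numEdges {V E : Type} [Fintype E] [DecidableEq V] (tail head : E → V) (v w : V) : ℕ :=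
  (Finset.univ.filter (fun e => tail e = v ∧ head e = w)).card

/-- The vertices other than the (global) sink `s`. -/
abbrev Vne {V : Type} (s : V) : Type := {v : V // v ≠ s}

/-- Firing the vertex `v`. -/
def fire {V E : Type} [Fintype E] [DecidableEq V] {s : V} (tail head : E → V)
    (σ : Vne s → ℕ) (v : Vne s) : Vne s → ℕ :=
  fun w =>
    if w = v then σ v + numEdges tail head v.1 v.1 - outdeg tail v.1
    else σ w + numEdges tail head v.1 w.1

/-- A (non-sink) vertex is active when it has at least as many chips as outgoing edges. -/
def Active {V E : Type} [Fintype E] [DecidableEq V] {s : V} (tail : E → V)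
    (σ : Vne s → ℕ) (v : Vne s) : Prop :=
  outdeg tail v.1 ≤ σ v

/-- The result of firing the vertices in the list `l` in order, starting from `σ`. -/
def fireList {V E : Type} [Fintype E] [DecidableEq V] {s : V} (tail head : E → V)
    (σ : Vne s → ℕ) : List (Vne s) → (Vne s → ℕ)
  | [] => σ
  | v :: l => fireList tail head (fire tail head σ v) l

/-- The firing sequence `l` is legal from `σ`. -/
def Legal {V E : Type} [Fintype E] [DecidableEq V] {s : V} (tail head : E → V)
    (σ : Vne s → ℕ) : List (Vne s) → Prop
  | [] => True
  | v :: l => Active tail σ v ∧ Legal tail head (fire tail head σ v) l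

/-- A configuration is stable when no non-sink vertex is active. -/
def Stable {V E : Type} [Fintype E] [DecidableEq V] {s : V} (tail : E → V)
    (σ : Vne s → ℕ) : Prop :=
  ∀ v, σ v < outdeg tail v.1

/-- `σ` is accessible: from any chip configuration `ζ` one can obtain `σ` by adding
some chips and then performing a legal sequence of firings of active vertices. -/
def Accessible {V E : Type} [Fintype E] [DecidableEq V] {s : V} (tail head : E → V)
    (σ : Vne s → ℕ) : Prop :=
  ∀ ζ : Vne s → ℕ, ∃ (β : Vne s → ℕ) (l : List (Vne s)),
    Legal tail head (fun v => ζ v + β v) l ∧ fireList tail head (fun v => ζ v + β v) l = σ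

/-- A chip configuration is recurrent when it is both stable and accessible. -/
def Recurrent {V E : Type} [Fintype E] [DecidableEq V] {s : V} (tail head : E → V)
    (σ : Vne s → ℕ) : Prop :=
  Stable tail σ ∧ Accessible tail head σ

/-- The reduced Laplacian of the digraph. -/
def reducedLaplacian {V E : Type} [Fintype E] [DecidableEq V] (tail head : E → V)
    (s : V) : Matrix (Vne s) (Vne s) ℤ :=
  fun i j => (if i = j then (outdeg tail i.1 : ℤ) else 0) - (numEdges tail head i.1 j.1 : ℤ)

/-- The integer row span of the reduced Laplacian. -/
def rowSpan {V E : Type} [Fintype E] [DecidableEq V] (tail head : E → V) (s : V) :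
    Submodule ℤ (Vne s → ℤ) :=
  Submodule.span ℤ (Set.range (fun i => reducedLaplacian tail head s i))

/-- `τ` is the stabilization `σ°` of `σ`. -/
def StabilizesTo {V E : Type} [Fintype E] [DecidableEq V] {s : V} (tail head : E → V)
    (σ τ : Vne s → ℕ) : Prop :=
  ∃ l, Legal tail head σ l ∧ fireList tail head σ l = τ ∧ Stable tail τ

/-- The sandpile group `S(G) = ℤ^{n-1} / ℤ^{n-1} Δ'(G)`. -/
abbrev SandpileGroup {V E : Type} [Fintype E] [DecidableEq V] (tail head : E → V)
    (s : V) : Type :=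
  (Vne s → ℤ) ⧸ rowSpan tail head s

/-- The natural map sending a chip configuration to its class in the sandpile group. -/
def toClass {V E : Type} [Fintype E] [DecidableEq V] (tail head : E → V) (s : V)
    (σ : Vne s → ℕ) : SandpileGroup tail head s :=
  Submodule.Quotient.mk (fun v => (σ v : ℤ))

open Matrix

def SinkReachable {V E : Type} (tail head : E → V) (s : V) : Prop :=
  ∀ v : V, Relation.ReflTransGen (fun a b => ∃ e, tail e = a ∧ head e = b) v s

section

variable {α : Type*} [DecidableEq α]

def firingVector (l : List α) : α → ℤ := fun a => l.count a

theorem firingVector_nonneg (l : List α) : 0 ≤ firingVector l :=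
  fun a => Int.natCast_nonneg (l.count a)

theorem firingVector_nil : firingVector ([] : List α) = 0 := by
  funext a
  simp [firingVector]

theorem firingVector_cons (x : α) (l : List α) :
    firingVector (x :: l) = Pi.single x 1 + firingVector l := by
  funext a
  by_cases h : a = x
  · subst h
    simp [firingVector, add_comm]
  · simp [firingVector, h, Ne.symm h]

theorem firingVector_append (l₁ l₂ : List α) :
    firingVector (l₁ ++ l₂) = firingVector l₁ + firingVector l₂ := by
  funext a
  simp [firingVector]

theorem length_eq_sum_firingVector [Fintype α] (l : List α) :
    (l.length : ℤ) = ∑ a, firingVector l a := by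
  have := Multiset.sum_count_eq_card (s := Finset.univ) (m := (l : Multiset α)) (by simp)
  simp only [Multiset.coe_count, Multiset.coe_card] at this
  simp only [firingVector]
  exact_mod_cast this.symm

end

section

variable {V E : Type} [DecidableEq V] [Fintype E] {tail head : E → V} {s : V}

theorem fire_add {σ : Vne s → ℕ} {v : Vne s} (hv : Active tail σ v) (γ : Vne s → ℕ) :
    fire tail head (σ + γ) v = fire tail head σ v + γ := by
  have : outdeg tail v.1 ≤ σ v := hv
  funext w
  by_cases h : w = v
  · subst h
    simp only [fire, if_true, Pi.add_apply]
    omega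
  · simp only [fire, h, if_false, Pi.add_apply]
    omega

theorem fire_cast {σ : Vne s → ℕ} {v : Vne s} (hv : Active tail σ v) (w : Vne s) :
    (fire tail head σ v w : ℤ) = σ w - reducedLaplacian tail head s v w := by
  have : outdeg tail v.1 ≤ σ v := hv
  by_cases h : w = v
  · subst h
    simp only [fire, reducedLaplacian, if_true]
    push_cast [show outdeg tail w.1 ≤ σ w + numEdges tail head w.1 w.1 by omega]
    ring
  · simp [fire, reducedLaplacian, h, Ne.symm h]

theorem fireList_append (σ : Vne s → ℕ) (l₁ l₂ : List (Vne s)) :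
    fireList tail head σ (l₁ ++ l₂) = fireList tail head (fireList tail head σ l₁) l₂ := by
  induction l₁ generalizing σ with
  | nil => rfl
  | cons x l ih => exact ih _

theorem legal_append {σ : Vne s → ℕ} {l₁ l₂ : List (Vne s)} :
    Legal tail head σ (l₁ ++ l₂) ↔
      Legal tail head σ l₁ ∧ Legal tail head (fireList tail head σ l₁) l₂ := by
  induction l₁ generalizing σ with
  | nil => simp [Legal, fireList]
  | cons x l ih => simp only [List.cons_append, Legal, fireList, ih, and_assoc]

theorem Legal.add {σ : Vne s → ℕ} {l : List (Vne s)} (hl : Legal tail head σ l)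
    (γ : Vne s → ℕ) : Legal tail head (σ + γ) l := by
  induction l generalizing σ with
  | nil => trivial
  | cons x l ih => exact ⟨le_add_right hl.1, fire_add hl.1 γ ▸ ih hl.2⟩

theorem fireList_add {σ : Vne s → ℕ} {l : List (Vne s)} (hl : Legal tail head σ l)
    (γ : Vne s → ℕ) : fireList tail head (σ + γ) l = fireList tail head σ l + γ := by
  induction l generalizing σ with
  | nil => rfl
  | cons x l ih => rw [fireList, fireList, fire_add hl.1, ih hl.2]

theorem le_fireList_of_not_mem (σ : Vne s → ℕ) {l : List (Vne s)} {v : Vne s} (hv : v ∉ l) :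
    σ v ≤ fireList tail head σ l v := by
  induction l generalizing σ with
  | nil => exact le_rfl
  | cons x l ih =>
    rw [List.mem_cons, not_or] at hv
    refine le_trans ?_ (ih _ hv.2)
    simp [fire, hv.1]

theorem exists_stabilizesTo_of_length_le (N : ℕ) {σ : Vne s → ℕ}
    (hN : ∀ l, Legal tail head σ l → l.length ≤ N) : ∃ τ, StabilizesTo tail head σ τ := by
  induction N generalizing σ with
  | zero =>
    by_contra hσ
    obtain ⟨v, hv⟩ : ∃ v, Active tail σ v := by
      simpa [Stable, Active] using fun h => hσ ⟨σ, [], trivial, rfl, h⟩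
    simpa using hN [v] ⟨hv, trivial⟩
  | succ N ih =>
    by_cases hσ : Stable tail σ
    · exact ⟨σ, [], trivial, rfl, hσ⟩
    obtain ⟨v, hv⟩ : ∃ v, Active tail σ v := by simpa [Stable, Active] using hσ
    obtain ⟨τ, l, hl, hτ, hτs⟩ := ih (σ := fire tail head σ v) fun l hl => by
      simpa using hN (v :: l) ⟨hv, hl⟩
    exact ⟨τ, v :: l, ⟨hv, hl⟩, hτ, hτs⟩

theorem Accessible.add {σ : Vne s → ℕ} (h : Accessible tail head σ) (γ : Vne s → ℕ) :
    Accessible tail head (σ + γ) := by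
  intro ζ
  obtain ⟨β, l, hl, hσ⟩ := h ζ
  have hζ : (fun v => ζ v + (β + γ) v) = (fun v => ζ v + β v) + γ :=
    funext fun v => (add_assoc _ _ _).symm
  refine ⟨β + γ, l, ?_, ?_⟩
  · rw [hζ]
    exact hl.add γ
  · rw [hζ, fireList_add hl, hσ]

theorem Accessible.fireList {σ : Vne s → ℕ} (h : Accessible tail head σ) {l : List (Vne s)}
    (hl : Legal tail head σ l) : Accessible tail head (fireList tail head σ l) := by
  intro ζ
  obtain ⟨β, l₀, hl₀, hσ⟩ := h ζ
  exact ⟨β, l₀ ++ l, legal_append.2 ⟨hl₀, hσ ▸ hl⟩, by rw [fireList_append, hσ]⟩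

theorem StabilizesTo.recurrent {σ τ : Vne s → ℕ} (hst : StabilizesTo tail head σ τ)
    (h : Accessible tail head σ) : Recurrent tail head τ := by
  obtain ⟨l, hl, rfl, hτ⟩ := hst
  exact ⟨hτ, h.fireList hl⟩

theorem toClass_add (σ τ : Vne s → ℕ) :
    toClass tail head s (σ + τ) = toClass tail head s σ + toClass tail head s τ := by
  rw [toClass, toClass, toClass, ← Submodule.Quotient.mk_add]
  exact congrArg _ (funext fun v => Nat.cast_add (σ v) (τ v))

theorem Recurrent.exists_legal_return {σ : Vne s → ℕ} (h : Recurrent tail head σ) :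
    ∃ (q : Vne s → ℕ) (l : List (Vne s)), Legal tail head (σ + q) l ∧
      fireList tail head (σ + q) l = σ ∧ ∀ v, v ∈ l := by
  obtain ⟨β, l, hl, hσ⟩ := h.2 (σ + fun v : Vne s => outdeg tail v.1)
  have hq : σ + ((fun v : Vne s => outdeg tail v.1) + β) =
      fun v => (σ + fun v : Vne s => outdeg tail v.1) v + β v :=
    (add_assoc _ _ _).symm
  refine ⟨(fun v : Vne s => outdeg tail v.1) + β, l, hq ▸ hl, hq ▸ hσ, fun v => ?_⟩
  -- a vertex that never fires keeps at least its out-degree in chips, more than `σ` has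
  by_contra hv
  have hle := le_fireList_of_not_mem (tail := tail) (head := head)
    (fun v => (σ + fun v : Vne s => outdeg tail v.1) v + β v) hv
  rw [hσ] at hle
  have := h.1 v
  simp only [Pi.add_apply] at hle
  omega

theorem Recurrent.exists_legal_return_le_firingVector {σ : Vne s → ℕ}
    (h : Recurrent tail head σ) (K : ℕ) :
    ∃ (q : Vne s → ℕ) (l : List (Vne s)), Legal tail head (σ + q) l ∧
      fireList tail head (σ + q) l = σ ∧ ∀ v, K ≤ firingVector l v := by
  induction K with
  | zero => exact ⟨0, [], trivial, add_zero σ, fun v => by simp [firingVector]⟩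
  | succ K ih =>
    obtain ⟨q, L, hL, hLσ, hLK⟩ := ih
    obtain ⟨q₁, l₁, hl₁, hl₁σ, hmem⟩ := h.exists_legal_return
    refine ⟨q₁ + q, l₁ ++ L, ?_, ?_, fun v => ?_⟩
    · rw [← add_assoc, legal_append, fireList_add hl₁, hl₁σ]
      exact ⟨hl₁.add q, hL⟩
    · rw [← add_assoc, fireList_append, fireList_add hl₁, hl₁σ, hLσ]
    · have h₁ : 1 ≤ firingVector l₁ v := by
        simpa [firingVector, List.count_pos_iff] using hmem v
      rw [firingVector_append, Pi.add_apply]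
      have := hLK v
      push_cast
      linarith

end

section

variable {V E : Type} [Fintype V] [DecidableEq V] [Fintype E] {tail head : E → V} {s : V}

theorem fireList_cast {σ : Vne s → ℕ} {l : List (Vne s)} (hl : Legal tail head σ l)
    (w : Vne s) :
    (fireList tail head σ l w : ℤ) =
      σ w - (firingVector l ᵥ* reducedLaplacian tail head s) w := by
  induction l generalizing σ with
  | nil => simp [fireList, firingVector_nil]
  | cons x l ih =>
    rw [fireList, ih hl.2, fire_cast hl.1, firingVector_cons, add_vecMul, single_one_vecMul]
    simp only [Pi.add_apply, Matrix.row]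
    ring

theorem mem_rowSpan_iff {x : Vne s → ℤ} :
    x ∈ rowSpan tail head s ↔ ∃ c, c ᵥ* reducedLaplacian tail head s = x := by
  rw [rowSpan, ← Matrix.row_def, ← range_vecMulLinear, LinearMap.mem_range]
  rfl

theorem toClass_eq_toClass_iff {σ τ : Vne s → ℕ} :
    toClass tail head s σ = toClass tail head s τ ↔
      ∃ c : Vne s → ℤ, ∀ w, (σ w : ℤ) - τ w = (c ᵥ* reducedLaplacian tail head s) w := by
  rw [toClass, toClass, Submodule.Quotient.eq, mem_rowSpan_iff]
  simp only [funext_iff, Pi.sub_apply, eq_comm]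

theorem toClass_fireList {σ : Vne s → ℕ} {l : List (Vne s)} (hl : Legal tail head σ l) :
    toClass tail head s (fireList tail head σ l) = toClass tail head s σ :=
  toClass_eq_toClass_iff.2 ⟨-firingVector l, fun w => by
    rw [fireList_cast hl, neg_vecMul, Pi.neg_apply]
    ring⟩

theorem vecMul_reducedLaplacian_nonpos {c : Vne s → ℤ} (hc : 0 ≤ c) {x : Vne s}
    (hx : c x = 0) : (c ᵥ* reducedLaplacian tail head s) x ≤ 0 := by
  refine Finset.sum_nonpos fun y _ => ?_
  by_cases h : y = x
  · simp [h, hx]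
  · exact mul_nonpos_of_nonneg_of_nonpos (hc y) (by simp [reducedLaplacian, h])

/-- The least action principle. -/
theorem firingVector_le_of_legal {σ : Vne s → ℕ} {l : List (Vne s)} (hl : Legal tail head σ l)
    {c : Vne s → ℤ} (hc : 0 ≤ c)
    (hstab : ∀ w, (σ w : ℤ) - (c ᵥ* reducedLaplacian tail head s) w < outdeg tail w.1) :
    firingVector l ≤ c := by
  induction l generalizing σ c with
  | nil => rwa [firingVector_nil]
  | cons x l ih =>
    obtain ⟨hx, hl⟩ := hl
    have hcx : 1 ≤ c x := by
      by_contra! h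
      have := vecMul_reducedLaplacian_nonpos (tail := tail) (head := head) hc
        (le_antisymm (by omega) (hc x))
      have hx' : (outdeg tail x.1 : ℤ) ≤ σ x := by exact_mod_cast hx
      linarith [hstab x]
    rw [firingVector_cons, ← le_sub_iff_add_le']
    refine ih hl (fun y => ?_) (fun w => ?_)
    · by_cases h : y = x
      · subst h; simpa using hcx
      · simpa [h] using hc y
    · rw [fire_cast hx, sub_vecMul, single_one_vecMul]
      simp only [Pi.sub_apply, Matrix.row]
      linarith [hstab w]

theorem outdeg_eq_sum_numEdges (v : V) : outdeg tail v = ∑ w, numEdges tail head v w := by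
  rw [outdeg, Finset.card_eq_sum_card_fiberwise (f := head) (t := Finset.univ)
    fun _ _ => Finset.mem_coe.2 (Finset.mem_univ _)]
  simp only [numEdges, Finset.filter_filter]

theorem reducedLaplacian_mulVec_one :
    reducedLaplacian tail head s *ᵥ 1 = fun y => (numEdges tail head y.1 s : ℤ) := by
  funext y
  simp only [mulVec, dotProduct, Pi.one_apply, mul_one, reducedLaplacian,
    Finset.sum_sub_distrib, Finset.sum_ite_eq, Finset.mem_univ, if_true]
  rw [outdeg_eq_sum_numEdges (head := head), Fintype.sum_eq_add_sum_subtype_ne _ s]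
  push_cast
  ring

theorem vecMul_reducedLaplacian_apply (c : Vne s → ℤ) (w : Vne s) :
    (c ᵥ* reducedLaplacian tail head s) w =
      c w * outdeg tail w.1 - ∑ y, c y * numEdges tail head y.1 w.1 := by
  simp [vecMul, dotProduct, reducedLaplacian, mul_sub, Finset.sum_sub_distrib, mul_ite]

theorem sum_fireList_cast {σ : Vne s → ℕ} {l : List (Vne s)} (hl : Legal tail head σ l) :
    ∑ w, (fireList tail head σ l w : ℤ) =
      ∑ w, (σ w : ℤ) - ∑ y, firingVector l y * numEdges tail head y.1 s := by
  simp_rw [fireList_cast hl]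
  rw [Finset.sum_sub_distrib, ← dotProduct_one (firingVector l ᵥ* _), ← dotProduct_mulVec,
    reducedLaplacian_mulVec_one]
  rfl

theorem sum_fireList_le {σ : Vne s → ℕ} {l : List (Vne s)} (hl : Legal tail head σ l) :
    ∑ w, fireList tail head σ l w ≤ ∑ w, σ w := by
  have hsink : 0 ≤ ∑ y, firingVector l y * numEdges tail head y.1 s :=
    Finset.sum_nonneg fun y _ => mul_nonneg (firingVector_nonneg l y) (Nat.cast_nonneg _)
  zify
  linarith [sum_fireList_cast hl]

theorem firingVector_mul_numEdges_sink_le {σ : Vne s → ℕ} {l : List (Vne s)}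
    (hl : Legal tail head σ l) (v : Vne s) :
    firingVector l v * numEdges tail head v.1 s ≤ ∑ w, (σ w : ℤ) := by
  have hv : firingVector l v * numEdges tail head v.1 s ≤
      ∑ y, firingVector l y * numEdges tail head y.1 s :=
    Finset.single_le_sum (f := fun y => firingVector l y * numEdges tail head y.1 s)
      (fun y _ => mul_nonneg (firingVector_nonneg l y) (Nat.cast_nonneg _)) (Finset.mem_univ v)
  have hfin : 0 ≤ ∑ w, (fireList tail head σ l w : ℤ) := by positivity
  linarith [sum_fireList_cast hl]

theorem firingVector_mul_numEdges_le {σ : Vne s → ℕ} {l : List (Vne s)}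
    (hl : Legal tail head σ l) (v w : Vne s) :
    firingVector l v * numEdges tail head v.1 w.1 ≤
      ∑ u, (σ u : ℤ) + firingVector l w * outdeg tail w.1 := by
  have hv : firingVector l v * numEdges tail head v.1 w.1 ≤
      ∑ y, firingVector l y * numEdges tail head y.1 w.1 :=
    Finset.single_le_sum (f := fun y => firingVector l y * numEdges tail head y.1 w.1)
      (fun y _ => mul_nonneg (firingVector_nonneg l y) (Nat.cast_nonneg _)) (Finset.mem_univ v)
  have hw : fireList tail head σ l w ≤ ∑ u, σ u :=
    (Finset.single_le_sum (fun _ _ => Nat.zero_le _) (Finset.mem_univ w)).trans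
      (sum_fireList_le hl)
  have hfin := fireList_cast hl w
  rw [vecMul_reducedLaplacian_apply] at hfin
  have hσw : 0 ≤ (σ w : ℤ) := by positivity
  zify at hw
  linarith

def FiringsBounded (tail head : E → V) (v : Vne s) : Prop :=
  ∃ B : ℤ, ∀ (σ : Vne s → ℕ) (l : List (Vne s)), Legal tail head σ l →
    firingVector l v ≤ B * (∑ w, (σ w : ℤ) + 1)

theorem firingsBounded_of_edge_sink {v : Vne s} {e : E} (hv : tail e = v.1) (hs : head e = s) :
    FiringsBounded tail head v := by
  refine ⟨1, fun σ l hl => ?_⟩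
  have hedge : (1 : ℤ) ≤ numEdges tail head v.1 s := by
    exact_mod_cast Finset.card_pos.2 ⟨e, by simp [hv, hs]⟩
  have hpos : 0 ≤ firingVector l v := firingVector_nonneg l v
  nlinarith [firingVector_mul_numEdges_sink_le hl v]

/-- Each firing of `v` sends a chip to `w`, which `w` can only pass on by firing. -/
theorem FiringsBounded.of_edge {v w : Vne s} (hw : FiringsBounded tail head w) {e : E}
    (hv : tail e = v.1) (hew : head e = w.1) : FiringsBounded tail head v := by
  obtain ⟨B, hB⟩ := hw
  refine ⟨1 + outdeg tail w.1 * B, fun σ l hl => ?_⟩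
  have hedge : (1 : ℤ) ≤ numEdges tail head v.1 w.1 := by
    exact_mod_cast Finset.card_pos.2 ⟨e, by simp [hv, hew]⟩
  have hpos : 0 ≤ firingVector l v := firingVector_nonneg l v
  have hσ : 0 ≤ ∑ u, (σ u : ℤ) := by positivity
  have hout : (0 : ℤ) ≤ outdeg tail w.1 := by positivity
  nlinarith [firingVector_mul_numEdges_le hl v w, hB σ l hl]

theorem firingsBounded
    (hglobal : SinkReachable tail head s)
    (v : Vne s) : FiringsBounded tail head v := by
  obtain ⟨u, hu⟩ := v
  induction hglobal u using Relation.ReflTransGen.head_induction_on with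
  | refl => exact absurd rfl hu
  | @head a c hstep _ ih =>
    obtain ⟨e, rfl, he⟩ := hstep
    by_cases hc : c = s
    · exact firingsBounded_of_edge_sink rfl (he.trans hc)
    · exact (ih hc).of_edge rfl he

theorem exists_stabilizesTo
    (hglobal : SinkReachable tail head s)
    (σ : Vne s → ℕ) : ∃ τ, StabilizesTo tail head σ τ := by
  choose B hB using firingsBounded hglobal
  refine exists_stabilizesTo_of_length_le (∑ v, B v * (∑ w, (σ w : ℤ) + 1)).toNat fun l hl => ?_
  have hlen : (l.length : ℤ) ≤ ∑ v, B v * (∑ w, (σ w : ℤ) + 1) := by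
    rw [length_eq_sum_firingVector]
    exact Finset.sum_le_sum fun v _ => hB v σ l hl
  omega

theorem accessible_of_outdeg_le
    (hglobal : SinkReachable tail head s)
    {c : Vne s → ℕ} (hc : ∀ v, outdeg tail v.1 ≤ c v) : Accessible tail head c := by
  intro ζ
  obtain ⟨ζ', l, hl, hζ', hstab⟩ := exists_stabilizesTo hglobal ζ
  refine ⟨fun v => c v - ζ' v, l, hl.add _, ?_⟩
  change fireList tail head (ζ + fun v => c v - ζ' v) l = c
  rw [fireList_add hl, hζ']
  funext v
  have := hstab v
  have := hc v
  simp only [Pi.add_apply]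
  omega

theorem Recurrent.nonneg_of_stable {σ₁ σ₂ : Vne s → ℕ} (h₁ : Recurrent tail head σ₁)
    (h₂ : Stable tail σ₂) {c : Vne s → ℤ}
    (hc : ∀ w, (σ₁ w : ℤ) - σ₂ w = (c ᵥ* reducedLaplacian tail head s) w) : 0 ≤ c := by
  -- return to `σ₁` firing each vertex so often that `firingVector L + c ≥ 0`; then
  -- `σ₁ + q - (firingVector L + c) Δ' = σ₂` is stable, so least action bounds `firingVector L`
  obtain ⟨K, hK⟩ := Finite.exists_le fun v => -c v
  obtain ⟨q, L, hL, hLσ, hLK⟩ := h₁.exists_legal_return_le_firingVector K.toNat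
  refine (le_add_iff_nonneg_right (firingVector L)).1 <|
    firingVector_le_of_legal hL (fun v => ?_) (fun w => ?_)
  · have := hK v
    have := hLK v
    simp only [Pi.add_apply, Pi.zero_apply]
    omega
  · have hret := fireList_cast hL w
    rw [hLσ, Pi.add_apply, Nat.cast_add] at hret
    have hσ₂ : (σ₂ w : ℤ) < outdeg tail w.1 := by exact_mod_cast h₂ w
    rw [add_vecMul, Pi.add_apply, Pi.add_apply, Nat.cast_add]
    linarith [hc w]

theorem Recurrent.eq_of_toClass_eq {σ₁ σ₂ : Vne s → ℕ} (h₁ : Recurrent tail head σ₁)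
    (h₂ : Recurrent tail head σ₂) (h : toClass tail head s σ₁ = toClass tail head s σ₂) :
    σ₁ = σ₂ := by
  obtain ⟨c, hc⟩ := toClass_eq_toClass_iff.1 h
  have hpos : 0 ≤ c := h₁.nonneg_of_stable h₂.1 hc
  have hneg : 0 ≤ -c := h₂.nonneg_of_stable h₁.1 fun w => by
    rw [neg_vecMul, Pi.neg_apply, ← hc w]
    ring
  have hc0 : c = 0 := le_antisymm (neg_nonneg.1 hneg) hpos
  funext w
  have := hc w
  rw [hc0, zero_vecMul, Pi.zero_apply] at this
  omega

theorem exists_pos_mem_rowSpan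
    (hglobal : SinkReachable tail head s) :
    ∃ p : Vne s → ℕ, (∀ v, 1 ≤ p v) ∧ (fun v => (p v : ℤ)) ∈ rowSpan tail head s := by
  obtain ⟨N, hN⟩ := Finite.exists_le fun v : Vne s => outdeg tail v.1
  obtain ⟨τ, l, hl, hτ, hstab⟩ := exists_stabilizesTo hglobal fun _ => N + 1
  have hτN : ∀ v, τ v < N + 1 := fun v => by have := hstab v; have := hN v; omega
  refine ⟨fun v => N + 1 - τ v, fun v => by dsimp only; have := hτN v; omega,
    mem_rowSpan_iff.2 ⟨firingVector l, funext fun v => ?_⟩⟩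
  have := fireList_cast hl v
  rw [hτ] at this
  push_cast [(hτN v).le] at this ⊢
  linarith

theorem exists_outdeg_le_toClass_eq
    (hglobal : SinkReachable tail head s)
    (x : Vne s → ℤ) :
    ∃ c : Vne s → ℕ, (∀ v, outdeg tail v.1 ≤ c v) ∧
      toClass tail head s c = Submodule.Quotient.mk x := by
  obtain ⟨p, hp1, hp⟩ := exists_pos_mem_rowSpan hglobal
  obtain ⟨k, hk⟩ := Finite.exists_le fun v => (outdeg tail v.1 : ℤ) - x v
  have hle : ∀ v, (outdeg tail v.1 : ℤ) ≤ x v + k.toNat * p v := fun v => by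
    have := hk v
    have : (1 : ℤ) ≤ p v := by exact_mod_cast hp1 v
    nlinarith [Int.self_le_toNat k]
  refine ⟨fun v => (x v + k.toNat * p v).toNat, fun v => by dsimp only; have := hle v; omega, ?_⟩
  rw [toClass, Submodule.Quotient.eq]
  convert (rowSpan tail head s).smul_mem (k.toNat : ℤ) hp using 1
  funext v
  have := hle v
  simp only [Pi.sub_apply, Pi.smul_apply, smul_eq_mul]
  omega

theorem exists_recurrent_toClass_eq
    (hglobal : SinkReachable tail head s)
    (x : Vne s → ℤ) :
    ∃ τ, Recurrent tail head τ ∧ toClass tail head s τ = Submodule.Quotient.mk x := by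
  obtain ⟨c, hc, hcx⟩ := exists_outdeg_le_toClass_eq hglobal x
  obtain ⟨τ, hτ⟩ := exists_stabilizesTo hglobal c
  refine ⟨τ, hτ.recurrent (accessible_of_outdeg_le hglobal hc), ?_⟩
  obtain ⟨l, hl, hlτ, -⟩ := hτ
  rw [← hlτ, toClass_fireList hl, hcx]

end

theorem recurrent_configurations_group_general
    {V E : Type} [Fintype V] [DecidableEq V] [Fintype E]
    (tail head : E → V)
    (s : V)
    (hglobal : ∀ v : V,
      Relation.ReflTransGen (fun a b => ∃ e, tail e = a ∧ head e = b) v s) :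
    (∀ σ₁ σ₂ τ : Vne s → ℕ, Recurrent tail head σ₁ → Recurrent tail head σ₂ →
        StabilizesTo tail head (fun v => σ₁ v + σ₂ v) τ → Recurrent tail head τ) ∧
    Function.Bijective
      (fun σ : {σ : Vne s → ℕ // Recurrent tail head σ} => toClass tail head s σ.1) ∧
    (∀ σ₁ σ₂ τ : Vne s → ℕ, Recurrent tail head σ₁ → Recurrent tail head σ₂ →
        StabilizesTo tail head (fun v => σ₁ v + σ₂ v) τ →
        toClass tail head s τ = toClass tail head s σ₁ + toClass tail head s σ₂) := by
  refine ⟨fun σ₁ σ₂ τ h₁ _ hst => hst.recurrent (h₁.2.add σ₂),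
    ⟨fun a b hab => Subtype.ext (a.2.eq_of_toClass_eq b.2 hab), fun y => ?_⟩, ?_⟩
  · obtain ⟨x, rfl⟩ := Submodule.Quotient.mk_surjective _ y
    obtain ⟨τ, hτ, hx⟩ := exists_recurrent_toClass_eq hglobal x
    exact ⟨⟨τ, hτ⟩, hx⟩
  · rintro σ₁ σ₂ τ - - ⟨l, hl, rfl, -⟩
    exact (toClass_fireList hl).trans (toClass_add σ₁ σ₂)

/-- **The group of recurrent configurations.**  For a digraph with a global sink:
the set of recurrent chip configurations is closed under the operation
`(σ₁, σ₂) ↦ (σ₁ + σ₂)°`; the map sending a recurrent configuration to its equivalence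
class modulo the reduced Laplacian is a bijection onto the sandpile group
`ℤ^{n-1}/ℤ^{n-1}Δ'(G)`; and this map carries the operation `(σ₁, σ₂) ↦ (σ₁ + σ₂)°`
to addition in the sandpile group.  Hence the recurrent configurations form an
abelian group isomorphic to `S(G)` via this map. -/
theorem recurrent_configurations_group
    {V E : Type} [Fintype V] [DecidableEq V] [Fintype E]
    (tail head : E → V)
    (s : V) (hs : outdeg tail s = 0)
    (hglobal : ∀ v : V,
      Relation.ReflTransGen (fun a b => ∃ e, tail e = a ∧ head e = b) v s) :
    (∀ σ₁ σ₂ τ : Vne s → ℕ, Recurrent tail head σ₁ → Recurrent tail head σ₂ →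
        StabilizesTo tail head (fun v => σ₁ v + σ₂ v) τ → Recurrent tail head τ) ∧
    Function.Bijective
      (fun σ : {σ : Vne s → ℕ // Recurrent tail head σ} => toClass tail head s σ.1) ∧
    (∀ σ₁ σ₂ τ : Vne s → ℕ, Recurrent tail head σ₁ → Recurrent tail head σ₂ →
        StabilizesTo tail head (fun v => σ₁ v + σ₂ v) τ →
        toClass tail head s τ = toClass tail head s σ₁ + toClass tail head s σ₂) :=
  recurrent_configurations_group_general tail head s hglobal
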